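/- Let L > 0 and fix α, β with 0 < |α| < 1 and β > 0. Let u, v : [0,L]² → ℝ be of class C³, where u satisfies u(0,y) = u(L,y) = 0, u_x(L,y) = α u_x(0,y), u_y(x,L) = β u_x(x,L), u_y(x,0) = 0, and v satisfies v(0,y) = v(L,y) = 0, v_x(0,y) = α v_x(L,y), v_y(x,L) = −β v_x(x,L), v_y(x,0) = 0, for all x, y ∈ [0,L]. Then ∫_Ω ( −u_x − u_xxx − ∂ₓ⁻¹ u_yy )(x,y) · v(x,y) dx dy = ∫_Ω u(x,y) · ( v_x + v_xxx + (∂ₓ⁻¹)* v_yy )(x,y) dx dy. -/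

import Mathlib

/-! The pairing `⟨f, g⟩ = ∫_Ω f g` is bilinear, so the identity splits into three. The terms
`u_x` and `u_xxx` move onto `v` by one and three integrations by parts in `x`: the boundary
terms vanish by the Dirichlet conditions and, in the middle step for `u_xxx`, because
`u_x(L) = α u_x(0)` and `v_x(0) = α v_x(L)` give `u_x v_x` the same value at `x = 0` and
`x = L`. For the nonlocal term, one integration by parts in `x` (without boundary terms) trades
`∂ₓ⁻¹` on `u_yy` for `(∂ₓ⁻¹)*` on `v`, and two in `y` move `∂_y²` onto `v`. By the conditions
on `u_y` and `v_y`, the remaining boundary terms add up to `β ∂ₓ (u(x,L) ∫₀ˣ v(s,L) ds)`,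
whose integral over `(0,L)` vanishes since `u(L,L) = 0`. -/

open MeasureTheory Real

noncomputable section

/-- Partial derivative in `x` of `u(x,y)`. -/
def pdx (u : ℝ → ℝ → ℝ) (x y : ℝ) : ℝ := deriv (fun x' => u x' y) x

/-- Third partial derivative in `x` of `u(x,y)`. -/
def pdx3 (u : ℝ → ℝ → ℝ) (x y : ℝ) : ℝ := iteratedDeriv 3 (fun x' => u x' y) x

/-- Partial derivative in `y` of `u(x,y)`. -/
def pdy (u : ℝ → ℝ → ℝ) (x y : ℝ) : ℝ := deriv (fun y' => u x y') y

/-- Second partial derivative in `y` of `u(x,y)`. -/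
def pdy2 (u : ℝ → ℝ → ℝ) (x y : ℝ) : ℝ := iteratedDeriv 2 (fun y' => u x y') y

/-- The nonlocal operator `(∂ₓ⁻¹ w)(x,y) = -∫ₓ^L w(s,y) ds`. -/
def pxInv (L : ℝ) (w : ℝ → ℝ → ℝ) (x y : ℝ) : ℝ := -(∫ s in x..L, w s y)

/-- The adjoint nonlocal operator `((∂ₓ⁻¹)* w)(x,y) = ∫₀^x w(s,y) ds`. -/
def pxInvStar (w : ℝ → ℝ → ℝ) (x y : ℝ) : ℝ := ∫ s in (0:ℝ)..x, w s y

open Function Set intervalIntegral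

section PartialDerivatives

variable {w : ℝ → ℝ → ℝ}

lemma pdx3_eq_pdx_pdx_pdx : pdx3 w = pdx (pdx (pdx w)) := by
  ext x y
  simp [pdx3, pdx, iteratedDeriv_succ]

lemma pdy2_eq_pdy_pdy : pdy2 w = pdy (pdy w) := by
  ext x y
  simp [pdy2, pdy, iteratedDeriv_succ]

lemma hasDerivAt_pdx (hw : Differentiable ℝ (uncurry w)) (x y : ℝ) :
    HasDerivAt (fun x' => w x' y) (pdx w x y) x :=
  (hw.comp (differentiable_id.prodMk (differentiable_const y)) x).hasDerivAt

lemma hasDerivAt_pdy (hw : Differentiable ℝ (uncurry w)) (x y : ℝ) :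
    HasDerivAt (w x) (pdy w x y) y :=
  (hw.comp ((differentiable_const x).prodMk differentiable_id) y).hasDerivAt

lemma pdx_eq_fderiv (hw : Differentiable ℝ (uncurry w)) (x y : ℝ) :
    pdx w x y = fderiv ℝ (uncurry w) (x, y) (1, 0) :=
  (((hw (x, y)).hasFDerivAt.comp_hasDerivAt x
    ((hasDerivAt_id x).prodMk (hasDerivAt_const x y))).deriv :)

lemma pdy_eq_fderiv (hw : Differentiable ℝ (uncurry w)) (x y : ℝ) :
    pdy w x y = fderiv ℝ (uncurry w) (x, y) (0, 1) :=
  (((hw (x, y)).hasFDerivAt.comp_hasDerivAt y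
    ((hasDerivAt_const y x).prodMk (hasDerivAt_id y))).deriv :)

lemma contDiff_pdx {m n : WithTop ℕ∞} (hw : ContDiff ℝ n (uncurry w)) (hmn : m + 1 ≤ n) :
    ContDiff ℝ m (uncurry (pdx w)) := by
  have hd : Differentiable ℝ (uncurry w) :=
    (hw.of_le (le_add_self.trans hmn)).differentiable one_ne_zero
  rw [show uncurry (pdx w) = fun p => fderiv ℝ (uncurry w) p (1, 0) from
    funext fun p => pdx_eq_fderiv hd p.1 p.2]
  exact (hw.fderiv_right hmn).clm_apply contDiff_const

lemma contDiff_pdy {m n : WithTop ℕ∞} (hw : ContDiff ℝ n (uncurry w)) (hmn : m + 1 ≤ n) :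
    ContDiff ℝ m (uncurry (pdy w)) := by
  have hd : Differentiable ℝ (uncurry w) :=
    (hw.of_le (le_add_self.trans hmn)).differentiable one_ne_zero
  rw [show uncurry (pdy w) = fun p => fderiv ℝ (uncurry w) p (0, 1) from
    funext fun p => pdy_eq_fderiv hd p.1 p.2]
  exact (hw.fderiv_right hmn).clm_apply contDiff_const

lemma continuous_pdx (hw : ContDiff ℝ 1 (uncurry w)) : Continuous (uncurry (pdx w)) :=
  (contDiff_pdx hw (zero_add 1).le).continuous

lemma continuous_pdy (hw : ContDiff ℝ 1 (uncurry w)) : Continuous (uncurry (pdy w)) :=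
  (contDiff_pdy hw (zero_add 1).le).continuous

lemma continuous_pdx3 (hw : ContDiff ℝ 3 (uncurry w)) : Continuous (uncurry (pdx3 w)) := by
  have h2 : ContDiff ℝ 2 (uncurry (pdx w)) := contDiff_pdx hw (by norm_num)
  rw [pdx3_eq_pdx_pdx_pdx]
  exact continuous_pdx (contDiff_pdx h2 (by norm_num))

lemma continuous_pdy2 (hw : ContDiff ℝ 2 (uncurry w)) : Continuous (uncurry (pdy2 w)) := by
  rw [pdy2_eq_pdy_pdy]
  exact continuous_pdy (contDiff_pdy hw (by norm_num))

end PartialDerivatives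

section Primitives

variable {w w' : ℝ → ℝ → ℝ}

lemma intervalIntegral_swap_of_continuous {f : ℝ → ℝ → ℝ} (hf : Continuous (uncurry f))
    (a b c d : ℝ) : ∫ x in a..b, ∫ y in c..d, f x y = ∫ y in c..d, ∫ x in a..b, f x y :=
  intervalIntegral_intervalIntegral_swap <|
    (hf.continuousOn.integrableOn_compact (isCompact_uIcc.prod isCompact_uIcc)).mono_set
      (prod_mono uIoc_subset_uIcc uIoc_subset_uIcc)

lemma continuous_pxInvStar (hw : Continuous (uncurry w)) : Continuous (uncurry (pxInvStar w)) :=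
  continuous_parametric_intervalIntegral_of_continuous (f := fun (p : ℝ × ℝ) s => w s p.2)
    (hw.comp (continuous_snd.prodMk continuous_fst.snd)) continuous_fst

lemma pxInv_eq_sub (L : ℝ) (hw : Continuous (uncurry w)) (x y : ℝ) :
    pxInv L w x y = pxInvStar w x y - pxInvStar w L y := by
  have h := (hw.uncurry_right y).intervalIntegrable (μ := volume)
  rw [pxInv, pxInvStar, pxInvStar, ← integral_interval_sub_left (h 0 L) (h 0 x)]
  ring

lemma continuous_pxInv (L : ℝ) (hw : Continuous (uncurry w)) :
    Continuous (uncurry (pxInv L w)) := by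
  simp_rw [uncurry_def, pxInv_eq_sub L hw]
  exact (continuous_pxInvStar hw).sub
    ((continuous_pxInvStar hw).comp (continuous_const.prodMk continuous_snd))

lemma hasDerivAt_pxInvStar (hw : Continuous (uncurry w)) (x y : ℝ) :
    HasDerivAt (fun x' => pxInvStar w x' y) (w x y) x :=
  ((hw.uncurry_right y).integral_hasStrictDerivAt 0 x).hasDerivAt

lemma hasDerivAt_pxInv (L : ℝ) (hw : Continuous (uncurry w)) (x y : ℝ) :
    HasDerivAt (fun x' => pxInv L w x' y) (w x y) x := by
  simp_rw [pxInv_eq_sub L hw]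
  exact (hasDerivAt_pxInvStar hw x y).sub_const _

lemma hasDerivAt_pxInvStar_snd (hw : Continuous (uncurry w)) (hw' : Continuous (uncurry w'))
    (hd : ∀ x y, HasDerivAt (w x) (w' x y) y) (x y : ℝ) :
    HasDerivAt (pxInvStar w x) (pxInvStar w' x y) y := by
  have hrepr : pxInvStar w x = fun t => pxInvStar w x 0 + ∫ t' in (0:ℝ)..t, pxInvStar w' x t' := by
    funext t
    have hftc : ∀ s, w s t = w s 0 + ∫ t' in (0:ℝ)..t, w' s t' := fun s => by
      rw [integral_eq_sub_of_hasDerivAt (fun t' _ => hd s t')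
        ((hw'.uncurry_left s).intervalIntegrable _ _)]
      ring
    simp only [pxInvStar, hftc]
    rw [integral_add ((hw.uncurry_right 0).intervalIntegrable _ _)
      ((continuous_parametric_intervalIntegral_of_continuous' hw' 0 t).intervalIntegrable _ _),
      intervalIntegral_swap_of_continuous hw']
  rw [hrepr]
  exact (((continuous_pxInvStar hw').uncurry_left x).integral_hasStrictDerivAt 0 y).hasDerivAt
    |>.const_add _

end Primitives

def pairing (L : ℝ) (f g : ℝ → ℝ → ℝ) : ℝ := ∫ x in (0:ℝ)..L, ∫ y in (0:ℝ)..L, f x y * g x y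

section Pairing

variable {L : ℝ} {f f' g g' h : ℝ → ℝ → ℝ}

lemma pairing_comm : pairing L f g = pairing L g f := by
  simp only [pairing, mul_comm]

lemma continuous_uncurry_mul (hf : Continuous (uncurry f)) (hg : Continuous (uncurry g)) :
    Continuous (uncurry fun x y => f x y * g x y) :=
  hf.mul hg

lemma intervalIntegrable_integral_mul (hf : Continuous (uncurry f)) (hg : Continuous (uncurry g))
    (a b c d : ℝ) : IntervalIntegrable (fun x => ∫ y in c..d, f x y * g x y) volume a b :=
  (continuous_parametric_intervalIntegral_of_continuous' (hf.mul hg) c d).intervalIntegrable a b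

lemma pairing_add_left (hf : Continuous (uncurry f)) (hg : Continuous (uncurry g))
    (hh : Continuous (uncurry h)) : pairing L (f + g) h = pairing L f h + pairing L g h := by
  rw [pairing, pairing, pairing, ← integral_add (intervalIntegrable_integral_mul hf hh _ _ _ _)
    (intervalIntegrable_integral_mul hg hh _ _ _ _)]
  refine integral_congr fun x _ => ?_
  simp only [Pi.add_apply, add_mul]
  exact integral_add (((continuous_uncurry_mul hf hh).uncurry_left x).intervalIntegrable _ _)
    (((continuous_uncurry_mul hg hh).uncurry_left x).intervalIntegrable _ _)

lemma pairing_neg_left : pairing L (-f) g = -pairing L f g := by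
  simp only [pairing, Pi.neg_apply, neg_mul, intervalIntegral.integral_neg]

lemma pairing_sub_left (hf : Continuous (uncurry f)) (hg : Continuous (uncurry g))
    (hh : Continuous (uncurry h)) : pairing L (f - g) h = pairing L f h - pairing L g h := by
  rw [sub_eq_add_neg, pairing_add_left (g := -g) hf hg.neg hh, pairing_neg_left, sub_eq_add_neg]

lemma pairing_add_right (hf : Continuous (uncurry f)) (hg : Continuous (uncurry g))
    (hh : Continuous (uncurry h)) : pairing L h (f + g) = pairing L h f + pairing L h g := by
  rw [pairing_comm, pairing_add_left hf hg hh, pairing_comm, pairing_comm (f := g)]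

lemma pairing_eq_pairing_swap (hf : Continuous (uncurry f)) (hg : Continuous (uncurry g)) :
    pairing L f g = pairing L (swap f) (swap g) :=
  intervalIntegral_swap_of_continuous (continuous_uncurry_mul hf hg) _ _ _ _

lemma pairing_deriv_snd_left (hf : ∀ x y, HasDerivAt (f x) (f' x y) y)
    (hg : ∀ x y, HasDerivAt (g x) (g' x y) y) (hfc : Continuous (uncurry f))
    (hf'c : Continuous (uncurry f')) (hgc : Continuous (uncurry g))
    (hg'c : Continuous (uncurry g')) :
    pairing L f' g = (∫ x in (0:ℝ)..L, (f x L * g x L - f x 0 * g x 0)) - pairing L f g' := by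
  have hbd : Continuous fun x => f x L * g x L - f x 0 * g x 0 :=
    ((hfc.uncurry_right L).mul (hgc.uncurry_right L)).sub
      ((hfc.uncurry_right 0).mul (hgc.uncurry_right 0))
  rw [pairing, pairing, ← integral_sub (hbd.intervalIntegrable _ _)
    (intervalIntegrable_integral_mul hfc hg'c _ _ _ _)]
  refine integral_congr fun x _ => ?_
  have h1 := ((continuous_uncurry_mul hf'c hgc).uncurry_left x).intervalIntegrable (μ := volume) 0 L
  have h2 := ((continuous_uncurry_mul hfc hg'c).uncurry_left x).intervalIntegrable (μ := volume) 0 L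
  rw [← integral_deriv_mul_eq_sub (fun y _ => hf x y) (fun y _ => hg x y)
    ((hf'c.uncurry_left x).intervalIntegrable _ _) ((hg'c.uncurry_left x).intervalIntegrable _ _),
    integral_add h1 h2]
  ring

lemma pairing_deriv_fst_left (hf : ∀ x y, HasDerivAt (fun x => f x y) (f' x y) x)
    (hg : ∀ x y, HasDerivAt (fun x => g x y) (g' x y) x) (hfc : Continuous (uncurry f))
    (hf'c : Continuous (uncurry f')) (hgc : Continuous (uncurry g))
    (hg'c : Continuous (uncurry g')) :
    pairing L f' g = (∫ y in (0:ℝ)..L, (f L y * g L y - f 0 y * g 0 y)) - pairing L f g' := by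
  rw [pairing_eq_pairing_swap hf'c hgc, pairing_eq_pairing_swap hfc hg'c]
  exact pairing_deriv_snd_left (fun y x => hf x y) (fun y x => hg x y)
    (hfc.comp continuous_swap) (hf'c.comp continuous_swap) (hgc.comp continuous_swap)
    (hg'c.comp continuous_swap)

end Pairing

section IntegrationByParts

variable {L : ℝ} {f g : ℝ → ℝ → ℝ}

lemma pairing_pdx_left (hL : 0 ≤ L) (hf : ContDiff ℝ 1 (uncurry f))
    (hg : ContDiff ℝ 1 (uncurry g))
    (hbd : ∀ y ∈ Icc 0 L, f L y * g L y = f 0 y * g 0 y) :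
    pairing L (pdx f) g = -pairing L f (pdx g) := by
  have hfx := continuous_pdx hf
  have hgx := continuous_pdx hg
  rw [pairing_deriv_fst_left (hasDerivAt_pdx (hf.differentiable one_ne_zero))
    (hasDerivAt_pdx (hg.differentiable one_ne_zero)) hf.continuous hfx hg.continuous hgx,
    integral_congr (g := fun _ => 0) fun y hy => sub_eq_zero.mpr (hbd y (uIcc_of_le hL ▸ hy)),
    intervalIntegral.integral_zero, zero_sub]

lemma pairing_pdx3_left (hL : 0 ≤ L) (hf : ContDiff ℝ 3 (uncurry f))
    (hg : ContDiff ℝ 3 (uncurry g)) (hf0 : ∀ y ∈ Icc 0 L, f 0 y = 0 ∧ f L y = 0)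
    (hg0 : ∀ y ∈ Icc 0 L, g 0 y = 0 ∧ g L y = 0)
    (hbd : ∀ y ∈ Icc 0 L, pdx f L y * pdx g L y = pdx f 0 y * pdx g 0 y) :
    pairing L (pdx3 f) g = -pairing L f (pdx3 g) := by
  have hfx : ContDiff ℝ 2 (uncurry (pdx f)) := contDiff_pdx hf (by norm_num)
  have hgx : ContDiff ℝ 2 (uncurry (pdx g)) := contDiff_pdx hg (by norm_num)
  rw [pdx3_eq_pdx_pdx_pdx, pdx3_eq_pdx_pdx_pdx,
    pairing_pdx_left hL (contDiff_pdx hfx le_rfl) (hg.of_le (by norm_num))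
      fun y hy => by simp [(hg0 y hy).1, (hg0 y hy).2],
    pairing_pdx_left hL (hfx.of_le (by norm_num)) (hgx.of_le (by norm_num)) hbd,
    pairing_pdx_left hL (hf.of_le (by norm_num)) (contDiff_pdx hgx le_rfl)
      fun y hy => by simp [(hf0 y hy).1, (hf0 y hy).2],
    neg_neg]

lemma pairing_pxInv_left (hf : Continuous (uncurry f)) (hg : Continuous (uncurry g)) :
    pairing L (pxInv L f) g = -pairing L f (pxInvStar g) := by
  have h := pairing_deriv_fst_left (L := L) (hasDerivAt_pxInv L hf) (hasDerivAt_pxInvStar hg)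
    (continuous_pxInv L hf) hf (continuous_pxInvStar hg) hg
  simp only [pxInv, pxInvStar, integral_same, neg_zero, zero_mul, mul_zero, sub_zero,
    intervalIntegral.integral_zero, zero_sub] at h
  rw [h, neg_neg]

lemma pxInvStar_pdy_of_boundary (β : ℝ) (hg : ContDiff ℝ 1 (uncurry g)) (hg0 : g 0 L = 0)
    (hgy : ∀ x ∈ Icc 0 L, pdy g x L = -β * pdx g x L ∧ pdy g x 0 = 0) {x : ℝ}
    (hx : x ∈ Icc 0 L) :
    pxInvStar (pdy g) x L = -β * g x L ∧ pxInvStar (pdy g) x 0 = 0 := by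
  have hsub : ∀ s ∈ uIcc 0 x, s ∈ Icc 0 L := fun s hs =>
    ⟨(uIcc_of_le hx.1 ▸ hs).1, (uIcc_of_le hx.1 ▸ hs).2.trans hx.2⟩
  constructor
  · rw [pxInvStar,
      integral_congr (g := fun s => -β * pdx g s L) fun s hs => (hgy s (hsub s hs)).1,
      intervalIntegral.integral_const_mul, integral_eq_sub_of_hasDerivAt
        (fun s _ => hasDerivAt_pdx (hg.differentiable one_ne_zero) s L)
        (((continuous_pdx hg).uncurry_right L).intervalIntegrable _ _),
      hg0, sub_zero]
  · rw [pxInvStar, integral_congr (g := fun _ => 0) fun s hs => (hgy s (hsub s hs)).2,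
      intervalIntegral.integral_zero]

lemma integral_boundary_pdy_pxInvStar (hL : 0 ≤ L) (β : ℝ) (hf : ContDiff ℝ 1 (uncurry f))
    (hg : ContDiff ℝ 1 (uncurry g)) (hfL : f L L = 0) (hg0 : g 0 L = 0)
    (hfy : ∀ x ∈ Icc 0 L, pdy f x L = β * pdx f x L ∧ pdy f x 0 = 0)
    (hgy : ∀ x ∈ Icc 0 L, pdy g x L = -β * pdx g x L ∧ pdy g x 0 = 0) :
    ∫ x in (0:ℝ)..L, (pdy f x L * pxInvStar g x L - pdy f x 0 * pxInvStar g x 0)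
      = ∫ x in (0:ℝ)..L, (f x L * pxInvStar (pdy g) x L - f x 0 * pxInvStar (pdy g) x 0) := by
  have hcf := hf.continuous
  have hcg := hg.continuous
  have hcfx := continuous_pdx hf
  have hcfy := continuous_pdy hf
  have hcV := continuous_pxInvStar hcg
  have hcVy := continuous_pxInvStar (continuous_pdy hg)
  rw [← sub_eq_zero, ← intervalIntegral.integral_sub
      (Continuous.intervalIntegrable (by fun_prop) _ _)
      (Continuous.intervalIntegrable (by fun_prop) _ _),
    integral_congr (g := fun x => β * (pdx f x L * pxInvStar g x L + f x L * g x L))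
      fun x hx => by
        obtain ⟨hfyL, hfy0⟩ := hfy x (uIcc_of_le hL ▸ hx)
        obtain ⟨hgyL, hgy0⟩ := pxInvStar_pdy_of_boundary β hg hg0 hgy (uIcc_of_le hL ▸ hx)
        simp only [hfyL, hfy0, hgyL, hgy0]
        ring,
    integral_eq_sub_of_hasDerivAt (f := fun x => β * (f x L * pxInvStar g x L))
      (fun x _ => ((hasDerivAt_pdx (hf.differentiable one_ne_zero) x L).mul
        (hasDerivAt_pxInvStar hcg x L)).const_mul β)
      (Continuous.intervalIntegrable (by fun_prop) _ _)]
  simp [hfL, pxInvStar]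

lemma pairing_pdy2_pxInvStar (hL : 0 ≤ L) (β : ℝ) (hf : ContDiff ℝ 2 (uncurry f))
    (hg : ContDiff ℝ 2 (uncurry g)) (hfL : f L L = 0) (hg0 : g 0 L = 0)
    (hfy : ∀ x ∈ Icc 0 L, pdy f x L = β * pdx f x L ∧ pdy f x 0 = 0)
    (hgy : ∀ x ∈ Icc 0 L, pdy g x L = -β * pdx g x L ∧ pdy g x 0 = 0) :
    pairing L (pdy2 f) (pxInvStar g) = pairing L f (pxInvStar (pdy2 g)) := by
  have hfy₁ : ContDiff ℝ 1 (uncurry (pdy f)) := contDiff_pdy hf (by norm_num)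
  have hgy₁ : ContDiff ℝ 1 (uncurry (pdy g)) := contDiff_pdy hg (by norm_num)
  have hcgyy := continuous_pdy hgy₁
  rw [pdy2_eq_pdy_pdy, pdy2_eq_pdy_pdy,
    pairing_deriv_snd_left (hasDerivAt_pdy (hfy₁.differentiable one_ne_zero))
      (hasDerivAt_pxInvStar_snd hg.continuous hgy₁.continuous
        (hasDerivAt_pdy (hg.differentiable (by norm_num))))
      hfy₁.continuous (continuous_pdy hfy₁)
      (continuous_pxInvStar hg.continuous) (continuous_pxInvStar hgy₁.continuous),
    pairing_deriv_snd_left (hasDerivAt_pdy (hf.differentiable (by norm_num)))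
      (hasDerivAt_pxInvStar_snd hgy₁.continuous hcgyy
        (hasDerivAt_pdy (hgy₁.differentiable one_ne_zero)))
      hf.continuous hfy₁.continuous (continuous_pxInvStar hgy₁.continuous)
      (continuous_pxInvStar hcgyy),
    integral_boundary_pdy_pxInvStar hL β (hf.of_le (by norm_num)) (hg.of_le (by norm_num)) hfL hg0
      hfy hgy,
    sub_sub_cancel]

end IntegrationByParts

theorem kp_adjoint_identity_general (L α β : ℝ) (hL : 0 < L)
    (u v : ℝ → ℝ → ℝ)
    (hu : ContDiff ℝ 3 (fun p : ℝ × ℝ => u p.1 p.2))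
    (hv : ContDiff ℝ 3 (fun p : ℝ × ℝ => v p.1 p.2))
    (hubx : ∀ y ∈ Set.Icc (0:ℝ) L, u 0 y = 0 ∧ u L y = 0 ∧ pdx u L y = α * pdx u 0 y)
    (huby : ∀ x ∈ Set.Icc (0:ℝ) L, pdy u x L = β * pdx u x L ∧ pdy u x 0 = 0)
    (hvbx : ∀ y ∈ Set.Icc (0:ℝ) L, v 0 y = 0 ∧ v L y = 0 ∧ pdx v 0 y = α * pdx v L y)
    (hvby : ∀ x ∈ Set.Icc (0:ℝ) L, pdy v x L = -β * pdx v x L ∧ pdy v x 0 = 0) :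
    (∫ x in (0:ℝ)..L, ∫ y in (0:ℝ)..L,
        (-(pdx u x y) - pdx3 u x y - pxInv L (pdy2 u) x y) * v x y)
      = ∫ x in (0:ℝ)..L, ∫ y in (0:ℝ)..L,
          u x y * (pdx v x y + pdx3 v x y + pxInvStar (pdy2 v) x y) := by
  have hcu : Continuous (uncurry u) := hu.continuous
  have hcv : Continuous (uncurry v) := hv.continuous
  have hcux : Continuous (uncurry (pdx u)) := continuous_pdx (hu.of_le (by norm_num))
  have hcvx : Continuous (uncurry (pdx v)) := continuous_pdx (hv.of_le (by norm_num))
  have hcAu : Continuous (uncurry (-pdx u - pdx3 u)) := hcux.neg.sub (continuous_pdx3 hu)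
  have hcAv : Continuous (uncurry (pdx v + pdx3 v)) := hcvx.add (continuous_pdx3 hv)
  have hcuyy := continuous_pdy2 (hu.of_le (by norm_num))
  have hcvyy := continuous_pdy2 (hv.of_le (by norm_num))
  have hbdx : ∀ y ∈ Icc 0 L, pdx u L y * pdx v L y = pdx u 0 y * pdx v 0 y := fun y hy => by
    rw [(hubx y hy).2.2, (hvbx y hy).2.2]
    ring
  change pairing L (-pdx u - pdx3 u - pxInv L (pdy2 u)) v
    = pairing L u (pdx v + pdx3 v + pxInvStar (pdy2 v))
  rw [pairing_sub_left hcAu (continuous_pxInv L hcuyy) hcv,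
    pairing_sub_left (f := -pdx u) hcux.neg (continuous_pdx3 hu) hcv, pairing_neg_left,
    pairing_add_right hcAv (continuous_pxInvStar hcvyy) hcu,
    pairing_add_right hcvx (continuous_pdx3 hv) hcu,
    pairing_pdx_left hL.le (hu.of_le (by norm_num)) (hv.of_le (by norm_num))
      fun y hy => by rw [(hubx y hy).1, (hubx y hy).2.1]; ring,
    pairing_pdx3_left hL.le hu hv (fun y hy => ⟨(hubx y hy).1, (hubx y hy).2.1⟩)
      (fun y hy => ⟨(hvbx y hy).1, (hvbx y hy).2.1⟩) hbdx,
    pairing_pxInv_left hcuyy hcv,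
    pairing_pdy2_pxInvStar hL.le β (hu.of_le (by norm_num)) (hv.of_le (by norm_num))
      (hubx L ⟨hL.le, le_rfl⟩).2.1 (hvbx L ⟨hL.le, le_rfl⟩).1 huby hvby]
  ring

/-- Adjointness identity: `⟨Au, v⟩ = ⟨u, A*v⟩` for the linearized KP-II operator
`A u = -u_x - u_xxx - ∂ₓ⁻¹ u_yy` with the closed-loop boundary conditions and
`A* v = v_x + v_xxx + (∂ₓ⁻¹)* v_yy` with the adjoint boundary conditions. -/
theorem kp_adjoint_identity (L α β : ℝ) (hL : 0 < L)
    (hα0 : 0 < |α|) (hα1 : |α| < 1) (hβ : 0 < β)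
    (u v : ℝ → ℝ → ℝ)
    (hu : ContDiff ℝ 3 (fun p : ℝ × ℝ => u p.1 p.2))
    (hv : ContDiff ℝ 3 (fun p : ℝ × ℝ => v p.1 p.2))
    (hubx : ∀ y ∈ Set.Icc (0:ℝ) L, u 0 y = 0 ∧ u L y = 0 ∧ pdx u L y = α * pdx u 0 y)
    (huby : ∀ x ∈ Set.Icc (0:ℝ) L, pdy u x L = β * pdx u x L ∧ pdy u x 0 = 0)
    (hvbx : ∀ y ∈ Set.Icc (0:ℝ) L, v 0 y = 0 ∧ v L y = 0 ∧ pdx v 0 y = α * pdx v L y)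
    (hvby : ∀ x ∈ Set.Icc (0:ℝ) L, pdy v x L = -β * pdx v x L ∧ pdy v x 0 = 0) :
    (∫ x in (0:ℝ)..L, ∫ y in (0:ℝ)..L,
        (-(pdx u x y) - pdx3 u x y - pxInv L (pdy2 u) x y) * v x y)
      = ∫ x in (0:ℝ)..L, ∫ y in (0:ℝ)..L,
          u x y * (pdx v x y + pdx3 v x y + pxInvStar (pdy2 v) x y) :=
  kp_adjoint_identity_general L α β hL u v hu hv hubx huby hvbx hvby
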